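/- The set {1, L₂ + L₃, L₂² + L₃²} is a ℤ-basis of the centre of the group algebra ℤS₃, where L₂ = (1 2) and L₃ = (1 3) + (2 3). -/

import Mathlib

/-!
The centre of a group algebra consists of the elements whose coefficients are constant on
conjugacy classes. The conjugacy classes of `S₃` are `{1}`, the transpositions and the 3-cycles,
so `1`, the transposition sum `T` and the 3-cycle sum `C` form a `ℤ`-basis of the centre.
Since `L₂ + L₃ = T` and `L₂² + L₃² = 3 + C`, the set `{1, T, 3 + C}` is obtained from it by a
unitriangular change of basis.
-/

/-- The element `g` of the symmetric group `S₃`, viewed in the group algebra `ℤS₃`. -/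
noncomputable def e3 (σ : Equiv.Perm (Fin 3)) : MonoidAlgebra ℤ (Equiv.Perm (Fin 3)) :=
  MonoidAlgebra.of ℤ (Equiv.Perm (Fin 3)) σ

/-- The Jucys–Murphy element `L₂ = (1 2)` of `ℤS₃`. -/
noncomputable def L2 : MonoidAlgebra ℤ (Equiv.Perm (Fin 3)) := e3 (Equiv.swap 0 1)

/-- The Jucys–Murphy element `L₃ = (1 3) + (2 3)` of `ℤS₃`. -/
noncomputable def L3 : MonoidAlgebra ℤ (Equiv.Perm (Fin 3)) := e3 (Equiv.swap 0 2) + e3 (Equiv.swap 1 2)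

open Equiv MonoidAlgebra

namespace MonoidAlgebra

variable {k G : Type*} [CommSemiring k] [Group G]

theorem mem_center_iff_coeff_conj {x : MonoidAlgebra k G} :
    x ∈ Subalgebra.center k (MonoidAlgebra k G) ↔
      ∀ g h : G, x.coeff (g * h * g⁻¹) = x.coeff h := by
  rw [Subalgebra.mem_center_iff]
  constructor
  · intro hx g h
    simpa [mul_assoc] using congr(($(hx (single g 1))).coeff (g * h)).symm
  · intro hx b
    induction b using induction_linear with
    | zero => simp
    | add b c hb hc => rw [add_mul, mul_add, hb, hc]
    | single g r =>
      ext h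
      simpa [mul_comm r, mul_assoc] using congrArg (· * r) (hx g⁻¹ (h * g⁻¹))

theorem coeff_eq_of_isConj {x : MonoidAlgebra k G}
    (hx : x ∈ Subalgebra.center k (MonoidAlgebra k G)) {g h : G} (hgh : IsConj g h) :
    x.coeff g = x.coeff h := by
  obtain ⟨c, rfl⟩ := isConj_iff.1 hgh
  exact (mem_center_iff_coeff_conj.1 hx c g).symm

end MonoidAlgebra

local notation "ℤS₃" => MonoidAlgebra ℤ (Perm (Fin 3))

lemma Equiv.Perm.fin_three_cases (g : Perm (Fin 3)) :
    g = 1 ∨ g = swap 0 1 ∨ g = swap 0 2 ∨ g = swap 1 2 ∨ g = finRotate 3 ∨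
      g = (finRotate 3)⁻¹ := by
  revert g
  decide

noncomputable def transpositionSum : ℤS₃ :=
  single (swap 0 1) 1 + single (swap 0 2) 1 + single (swap 1 2) 1

noncomputable def threeCycleSum : ℤS₃ := single (finRotate 3) 1 + single (finRotate 3)⁻¹ 1

lemma L2_add_L3 : L2 + L3 = transpositionSum := by
  simp only [L2, L3, e3, of_apply, transpositionSum, add_assoc]

lemma L2_sq_add_L3_sq : L2 ^ 2 + L3 ^ 2 = 3 + threeCycleSum := by
  ext g
  simp only [L2, L3, e3, of_apply, threeCycleSum, sq, add_mul, mul_add, single_mul_single,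
    mul_one, coeff_add, coeff_ofNat, coeff_single, Finsupp.add_apply, Finsupp.single_apply]
  revert g
  decide

lemma transpositionSum_mem_center : transpositionSum ∈ Subalgebra.center ℤ ℤS₃ := by
  rw [mem_center_iff_coeff_conj]
  simp only [transpositionSum, coeff_add, Finsupp.add_apply, coeff_single, Finsupp.single_apply]
  decide

lemma threeCycleSum_mem_center : threeCycleSum ∈ Subalgebra.center ℤ ℤS₃ := by
  rw [mem_center_iff_coeff_conj]
  simp only [threeCycleSum, coeff_add, Finsupp.add_apply, coeff_single, Finsupp.single_apply]
  decide

lemma eq_combination_of_mem_center {x : ℤS₃} (hx : x ∈ Subalgebra.center ℤ ℤS₃) :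
    x = (x.coeff 1 - 3 * x.coeff (finRotate 3)) • 1 + x.coeff (swap 0 1) • transpositionSum
      + x.coeff (finRotate 3) • (3 + threeCycleSum) := by
  have h02 : x.coeff (swap 0 2) = x.coeff (swap 0 1) :=
    coeff_eq_of_isConj hx (Perm.isConj_swap (by decide) (by decide))
  have h12 : x.coeff (swap 1 2) = x.coeff (swap 0 1) :=
    coeff_eq_of_isConj hx (Perm.isConj_swap (by decide) (by decide))
  have hinv : x.coeff (finRotate 3)⁻¹ = x.coeff (finRotate 3) :=
    coeff_eq_of_isConj hx (isConj_iff.2 ⟨swap 0 1, by decide⟩)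
  rw [MonoidAlgebra.one_def]
  ext g
  rcases g.fin_three_cases with rfl | rfl | rfl | rfl | rfl | rfl <;>
    simp +decide only [transpositionSum, threeCycleSum, coeff_add, coeff_smul, coeff_ofNat,
      coeff_single, Finsupp.add_apply, Finsupp.smul_apply, Finsupp.single_apply, if_true,
      if_false, smul_eq_mul] <;>
    linarith

lemma linearIndependent_one_transpositionSum_three_add_threeCycleSum :
    LinearIndependent ℤ ![(1 : ℤS₃), transpositionSum, 3 + threeCycleSum] := by
  rw [Fintype.linearIndependent_iff]
  intro f hf
  simp only [Fin.sum_univ_three, Matrix.cons_val_zero, Matrix.cons_val_one, Matrix.cons_val_two,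
    Matrix.head_cons, Matrix.tail_cons, MonoidAlgebra.one_def] at hf
  have h1 := congr(($hf).coeff 1)
  have hswap := congr(($hf).coeff (swap 0 1))
  have hrot := congr(($hf).coeff (finRotate 3))
  simp +decide only [transpositionSum, threeCycleSum, coeff_add, coeff_smul, coeff_ofNat,
    coeff_single, coeff_zero, Finsupp.add_apply, Finsupp.smul_apply, Finsupp.single_apply,
    Finsupp.coe_zero, Pi.zero_apply, if_true, if_false, smul_eq_mul] at h1 hswap hrot
  have hb : f 1 = 0 := by linarith
  have hc : f 2 = 0 := by linarith
  have ha : f 0 = 0 := by linarith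
  intro i
  fin_cases i <;> assumption

lemma center_eq_span_one_transpositionSum_three_add_threeCycleSum :
    Subalgebra.toSubmodule (Subalgebra.center ℤ ℤS₃) =
      Submodule.span ℤ {1, transpositionSum, 3 + threeCycleSum} := by
  apply le_antisymm
  · intro x hx
    rw [eq_combination_of_mem_center hx]
    refine add_mem (add_mem ?_ ?_) ?_ <;>
      exact Submodule.smul_mem _ _ (Submodule.subset_span (by simp))
  · rw [Submodule.span_le]
    rintro y (rfl | rfl | rfl)
    · exact one_mem (Subalgebra.center ℤ ℤS₃)
    · exact transpositionSum_mem_center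
    · exact add_mem (ofNat_mem (Subalgebra.center ℤ ℤS₃) 3) threeCycleSum_mem_center

/-- `{1, L₂ + L₃, L₂² + L₃²}` is a ℤ-basis of the centre of `ℤS₃`. -/
theorem stmt14 :
    LinearIndependent ℤ
      ![(1 : MonoidAlgebra ℤ (Equiv.Perm (Fin 3))), L2 + L3, L2 ^ 2 + L3 ^ 2] ∧
    Subalgebra.toSubmodule (Subalgebra.center ℤ (MonoidAlgebra ℤ (Equiv.Perm (Fin 3)))) =
      Submodule.span ℤ
        {(1 : MonoidAlgebra ℤ (Equiv.Perm (Fin 3))), L2 + L3, L2 ^ 2 + L3 ^ 2} := by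
  rw [L2_add_L3, L2_sq_add_L3_sq]
  exact ⟨linearIndependent_one_transpositionSum_three_add_threeCycleSum,
    center_eq_span_one_transpositionSum_three_add_threeCycleSum⟩
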